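/- arXiv:2409.18056 — 9 statements merged into one kernel-verified Lean document; each statement's English description precedes it below -/
import Mathlib

section
/- Let A be a skew brace and I an ideal of A. Then the additive subgroup [I,A]_Grp generated by {a*b, b*a, c + b*a - c : a ∈ I, b, c ∈ A} is an ideal of A. -/
/-- A skew brace: a type with an additive group structure and a second group
operation `circ` (with inverse `cinv` and the same identity `0`) satisfying the
skew brace compatibility law `a ∘ (b + c) = a ∘ b - a + a ∘ c`. -/
class SkewBrace (A : Type*) extends AddGroup A where
  circ : A → A → A
  cinv : A → A
  circ_assoc : ∀ a b c : A, circ (circ a b) c = circ a (circ b c)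
  zero_circ : ∀ a : A, circ 0 a = a
  circ_zero : ∀ a : A, circ a 0 = a
  cinv_circ : ∀ a : A, circ (cinv a) a = 0
  circ_cinv : ∀ a : A, circ a (cinv a) = 0
  compat : ∀ a b c : A, circ a (b + c) = circ a b - a + circ a c

namespace SkewBrace

variable {A : Type*} [SkewBrace A]

/-- The star operation `a * b = -a + a ∘ b - b`. -/
def star (a b : A) : A := -a + circ a b - b

/-- The right distributor `[a,b,c] = (a+b)∘c - b∘c + c - a∘c`. -/
def rd (a b c : A) : A := circ (a + b) c - circ b c + c - circ a c

/-- An ideal of a skew brace: a normal additive subgroup closed under the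
star operation on both sides. -/
def IsIdeal (I : AddSubgroup A) : Prop :=
  (∀ a : A, ∀ x ∈ I, a + x - a ∈ I) ∧
  (∀ a : A, ∀ x ∈ I, star a x ∈ I) ∧
  (∀ a : A, ∀ x ∈ I, star x a ∈ I)

/-- `Z_R(A)`: additively central elements annihilating all right distributors. -/
def ZR (A : Type*) [SkewBrace A] : Set A :=
  {z | (∀ a : A, z + a = a + z) ∧ ∀ b c : A, rd z b c = 0 ∧ rd b z c = 0 ∧ rd b c z = 0}

end SkewBrace

open SkewBrace

/-!
Every generator of `[I, A]_Grp` lies in `I`, so the star products of elements of `[I, A]_Grp` with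
arbitrary elements are themselves generators. The only real point is additive normality: conjugates
of `b * a` are generators by design, and `c + a * b - c = -(a * c) + a * (c + b)` follows from the
compatibility law.
-/

theorem AddSubgroup.normal_closure_of_conj_mem {G : Type*} [AddGroup G] {s : Set G}
    (h : ∀ g : G, ∀ x ∈ s, g + x + -g ∈ closure s) : (closure s).Normal :=
  normalizer_eq_top_iff.mp <| top_le_iff.mp <| le_normalizer_closure_iff.mpr fun g _ => h g

namespace SkewBrace

variable {A : Type*} [SkewBrace A]

theorem add_star_sub (a b c : A) : c + star a b - c = -star a c + star a (c + b) := by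
  simp only [star, compat, sub_eq_add_neg, neg_add_rev, neg_neg, add_assoc, neg_add_cancel_left,
    add_neg_cancel_left]

theorem isIdeal_of_normal {I J : AddSubgroup A} (hJ : J.Normal) (hJI : J ≤ I)
    (hleft : ∀ a : A, ∀ x ∈ I, star a x ∈ J) (hright : ∀ a : A, ∀ x ∈ I, star x a ∈ J) :
    IsIdeal J :=
  ⟨fun a x hx => sub_eq_add_neg (a + x) a ▸ hJ.conj_mem x hx a,
    fun a x hx => hleft a x (hJI hx), fun a x hx => hright a x (hJI hx)⟩

/-- `[I, A]_Grp` is the additive subgroup generated by this set. -/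
def commutatorGenerators (I : AddSubgroup A) : Set A :=
  {x | ∃ a ∈ I, ∃ b c : A, x = star a b ∨ x = star b a ∨ x = c + star b a - c}

theorem commutatorGenerators_subset {I : AddSubgroup A} (hI : IsIdeal I) :
    commutatorGenerators I ⊆ I := by
  rintro x ⟨a, ha, b, c, rfl | rfl | rfl⟩
  · exact hI.2.2 b a ha
  · exact hI.2.1 b a ha
  · exact hI.1 c _ (hI.2.1 b a ha)

theorem conj_mem_closure_commutatorGenerators {I : AddSubgroup A} (g : A) {x : A}
    (hx : x ∈ commutatorGenerators I) :
    g + x + -g ∈ AddSubgroup.closure (commutatorGenerators I) := by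
  rw [← sub_eq_add_neg]
  obtain ⟨a, ha, b, c, rfl | rfl | rfl⟩ := hx
  · rw [add_star_sub]
    exact add_mem (neg_mem (AddSubgroup.subset_closure ⟨a, ha, g, 0, Or.inl rfl⟩))
      (AddSubgroup.subset_closure ⟨a, ha, g + b, 0, Or.inl rfl⟩)
  · exact AddSubgroup.subset_closure ⟨a, ha, b, g, Or.inr (Or.inr rfl)⟩
  · have hconj : g + (c + star b a - c) - g = (g + c) + star b a - (g + c) := by
      simp only [sub_eq_add_neg, neg_add_rev, add_assoc]
    rw [hconj]
    exact AddSubgroup.subset_closure ⟨a, ha, b, g + c, Or.inr (Or.inr rfl)⟩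

end SkewBrace

theorem stmt1 {A : Type*} [SkewBrace A] (I : AddSubgroup A) (hI : IsIdeal I) :
    IsIdeal (AddSubgroup.closure
      {x : A | ∃ a ∈ I, ∃ b c : A, x = star a b ∨ x = star b a ∨ x = c + star b a - c}) := by
  have hnormal : (AddSubgroup.closure (commutatorGenerators I)).Normal :=
    AddSubgroup.normal_closure_of_conj_mem fun g _ hx => conj_mem_closure_commutatorGenerators g hx
  exact isIdeal_of_normal hnormal ((AddSubgroup.closure_le I).mpr (commutatorGenerators_subset hI))
    (fun a x hx => AddSubgroup.subset_closure ⟨x, hx, a, 0, Or.inr (Or.inl rfl)⟩)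
    (fun a x hx => AddSubgroup.subset_closure ⟨x, hx, a, 0, Or.inl rfl⟩)
end

section
/- In any skew brace A, the center Z(A,+) of the additive group is a strong left ideal of A, i.e., it is a normal subgroup of (A,+), a subgroup of (A,∘), and satisfies a * z ∈ Z(A,+) for all a ∈ A and z ∈ Z(A,+). -/
open SkewBrace

section Aux

variable {A : Type*} [SkewBrace A]

/-- The lambda map `λ_a(b) = -a + a∘b`. -/
def lam (a b : A) : A := -a + circ a b

lemma lam_add (a b c : A) : lam a (b + c) = lam a b + lam a c := by
  simp [lam, compat, sub_eq_add_neg, add_assoc]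

lemma circ_neg_cinv (a : A) : circ a (-(cinv a)) = a + a := by
  have h := compat a (-(cinv a)) (cinv a)
  rw [neg_add_cancel, circ_zero, circ_cinv, add_zero] at h
  exact sub_eq_iff_eq_add.mp h.symm

lemma lam_lam_cinv (a g : A) : lam a (lam (cinv a) g) = g := by
  rw [show lam (cinv a) g = -(cinv a) + circ (cinv a) g from rfl, lam_add]
  rw [show lam a (-(cinv a)) = -a + circ a (-(cinv a)) from rfl, circ_neg_cinv]
  rw [show lam a (circ (cinv a) g) = -a + circ a (circ (cinv a) g) from rfl,
    ← circ_assoc, circ_cinv, zero_circ]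
  rw [neg_add_cancel_left, add_neg_cancel_left]

lemma lam_center (a : A) {z : A} (hz : z ∈ AddSubgroup.center A) :
    lam a z ∈ AddSubgroup.center A := by
  rw [AddSubgroup.mem_center_iff] at hz ⊢
  intro g
  obtain ⟨x, rfl⟩ : ∃ x, lam a x = g := ⟨lam (cinv a) g, lam_lam_cinv a g⟩
  rw [← lam_add, ← lam_add, hz x]

end Aux

theorem stmt2 {A : Type*} [SkewBrace A] :
    (∀ a : A, ∀ z ∈ AddSubgroup.center A, a + z - a ∈ AddSubgroup.center A) ∧
    (∀ z ∈ AddSubgroup.center A, ∀ w ∈ AddSubgroup.center A,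
        SkewBrace.circ z w ∈ AddSubgroup.center A) ∧
    (∀ z ∈ AddSubgroup.center A, SkewBrace.cinv z ∈ AddSubgroup.center A) ∧
    (∀ a : A, ∀ z ∈ AddSubgroup.center A, star a z ∈ AddSubgroup.center A) := by
  refine ⟨fun a z hz => ?_, fun z hz w hw => ?_, fun z hz => ?_, fun a z hz => ?_⟩
  · have h := AddSubgroup.mem_center_iff.mp hz a
    rw [h, add_sub_cancel_right]
    exact hz
  · have h : circ z w = z + lam z w := by
      rw [show lam z w = -z + circ z w from rfl, add_neg_cancel_left]
    rw [h]
    exact AddSubgroup.add_mem _ hz (lam_center z hw)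
  · have h : lam (cinv z) z = -(cinv z) := by
      rw [show lam (cinv z) z = -(cinv z) + circ (cinv z) z from rfl, cinv_circ, add_zero]
    have := lam_center (cinv z) hz
    rw [h] at this
    simpa using AddSubgroup.neg_mem _ this
  · exact AddSubgroup.sub_mem _ (lam_center a hz) hz
end

section
/- Let A be a skew brace and I an ideal of A. Then [I,A]_RadRng, the additive subgroup generated by all right distributors [a,b,c], [c,a,b], [b,c,a] and commutators a+b-a-b for a ∈ I and b,c ∈ A, is an ideal of A. -/
open SkewBrace

/-!
Write `λ_a x = -a + a ∘ x` and `ρ_a x = x ∘ a - a`, so that `a * x = λ_a x - x` and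
`x * a = -x + ρ_a x`. Let `J = [I, A]_RadRng`. It lies in `I`, and it is normal because it contains
the commutators of `I` with `A`. Each `λ_a` is additive and maps the generators of `J` into `J`:
`a ∘ [b, c, d]` is `a` plus a combination of distributors with an entry in `I`. Hence `a * J ⊆ J`.
In `A / J` the image of `I` is central and `ρ_a` is additive on sums with a summand in `I`.
Splitting a generator into summands in `I`, `ρ_a [b, c, d]` becomes `[b, c, d ∘ a]` when `b` or `c`
lies in `I`, and, when `d` lies in `I`, an expression in the `λ_x (ρ_a d)` that cancels. So `ρ_a`
vanishes on `J` modulo `J`, which gives `J * a ⊆ J`.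
-/

namespace SkewBrace

variable {A : Type*} [SkewBrace A]

theorem circ_neg (a x : A) : circ a (-x) = a - circ a x + a := by
  have h := compat a x (-x)
  rw [add_neg_cancel, circ_zero] at h
  rw [eq_comm, ← eq_neg_add_iff_add_eq, neg_sub] at h
  exact h

def lam (a : A) : A →+ A where
  toFun x := -a + circ a x
  map_zero' := by rw [circ_zero, neg_add_cancel]
  map_add' x y := by simp only [compat, sub_eq_add_neg, add_assoc]

theorem lam_apply (a x : A) : lam a x = -a + circ a x := rfl

theorem circ_eq_add_lam (a x : A) : circ a x = a + lam a x := by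
  rw [lam_apply, add_neg_cancel_left]

theorem star_eq_lam_sub (a x : A) : star a x = lam a x - x := by
  simp [star, lam]

def rho (a x : A) : A := circ x a - a

theorem star_eq_neg_add_rho (x a : A) : star x a = -x + rho a x := by
  simp [star, rho, sub_eq_add_neg, add_assoc]

theorem rho_add (a x y : A) : rho a (x + y) = rd x y a + rho a x + rho a y := by
  simp [rho, rd, sub_eq_add_neg, add_assoc]

theorem rd_circ_right (b c d a : A) :
    rd b c (circ d a) =
      rho a (circ (b + c) d) - rho a (circ c d) + rho a d - rho a (circ b d) := by
  simp [rho, rd, circ_assoc, sub_eq_add_neg, add_assoc]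

theorem circ_sub_add_sub (a x y z w : A) :
    circ a (x - y + z - w) = circ a x - circ a y + circ a z - circ a w + a := by
  simp [sub_eq_add_neg, compat, circ_neg, add_assoc]

theorem circ_rd (a b c d : A) :
    circ a (rd b c d) = rd (circ a b - a) (circ a c) d - rd (circ a b - a) a d + a := by
  have hb : circ a b = (circ a b - a) + a := (sub_add_cancel _ _).symm
  have hbc : circ a (b + c) = (circ a b - a) + circ a c := compat a b c
  rw [rd, circ_sub_add_sub, ← circ_assoc, ← circ_assoc, ← circ_assoc, hbc]
  conv_lhs => rw [hb]
  simp [rd, sub_eq_add_neg, add_assoc]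

theorem circ_rd' (a b c d : A) :
    circ a (rd b c d) = rd (circ a b) (lam a c) d + ((circ (circ a b) d - circ a d) +
      -rd a (lam a c) d + -(circ (circ a b) d - circ a d)) + a := by
  have hc : circ a c = a + lam a c := circ_eq_add_lam a c
  have hbc : circ a (b + c) = circ a b + lam a c := by
    rw [compat, hc, sub_eq_add_neg, add_assoc, neg_add_cancel_left]
  rw [rd, circ_sub_add_sub, ← circ_assoc, ← circ_assoc, ← circ_assoc, hbc, hc]
  simp [rd, sub_eq_add_neg, add_assoc]

theorem lam_add_left (x y h : A) :
    lam (x + y) h =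
      -(x + y) + rd x y h + (x + y) + (-y + (lam x h - h) + y) + lam y h := by
  simp [lam_apply, rd, sub_eq_add_neg, add_assoc]

theorem rho_circ (a x d : A) : rho a (circ x d) = x + lam x (rho a d) - x + rho a x := by
  rw [rho, circ_assoc, ← sub_add_cancel (circ d a) a, compat]
  simp [rho, lam_apply, sub_eq_add_neg, add_assoc]

theorem rd_eq_conj_add_conj (b c d : A) :
    rd b c d = (b + c) + (lam (b + c) d - lam c d) - (b + c) + (b + (d - lam b d) - b) := by
  simp [rd, lam_apply, sub_eq_add_neg, add_assoc]

theorem circ_eq_add_star_add (x a : A) : circ x a = x + star x a + a := by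
  simp [star, add_assoc]

section Ideal

variable {I : AddSubgroup A}

theorem IsIdeal.normal (hI : IsIdeal I) : I.Normal :=
  ⟨fun x hx a => by simpa [sub_eq_add_neg] using hI.1 a x hx⟩

theorem IsIdeal.lam_mem (hI : IsIdeal I) (a : A) {x : A} (hx : x ∈ I) : lam a x ∈ I := by
  rw [← sub_add_cancel (lam a x) x, ← star_eq_lam_sub]
  exact add_mem (hI.2.1 a x hx) hx

theorem IsIdeal.mk_circ_right (hI : IsIdeal I) (a : A) {x y : A} (h : (x : A ⧸ I) = y) :
    ((circ a x : A) : A ⧸ I) = circ a y := by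
  have hy : circ a y = circ a x + lam a (-x + y) := by
    conv_lhs => rw [← add_neg_cancel_left x y]
    rw [compat, circ_eq_add_lam a (-x + y), ← add_assoc, sub_add_cancel]
  rw [QuotientAddGroup.eq, hy, neg_add_cancel_left]
  exact hI.lam_mem a (QuotientAddGroup.eq.mp h)

theorem IsIdeal.mk_circ_left (hI : IsIdeal I) (a : A) {x y : A} (h : (x : A ⧸ I) = y) :
    ((circ x a : A) : A ⧸ I) = circ y a := by
  have := hI.normal
  set j := circ (cinv x) y
  have hj : j ∈ I := by
    have : j = lam (cinv x) (-x + y) := by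
      change circ (cinv x) y = _
      conv_lhs => rw [← add_neg_cancel_left x y]
      rw [compat, cinv_circ, zero_sub, lam_apply]
    exact this ▸ hI.lam_mem _ (QuotientAddGroup.eq.mp h)
  have hy : y = circ x j := by rw [← circ_assoc, circ_cinv, zero_circ]
  have hja : ((circ j a : A) : A ⧸ I) = a := by
    rw [circ_eq_add_star_add, QuotientAddGroup.mk_add, QuotientAddGroup.mk_add,
      (QuotientAddGroup.eq_zero_iff _).2 hj, (QuotientAddGroup.eq_zero_iff _).2 (hI.2.2 a j hj),
      zero_add, zero_add]
  rw [hy, circ_assoc]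
  exact hI.mk_circ_right x hja.symm

theorem IsIdeal.circ_sub_circ_mem (hI : IsIdeal I) (a : A) {x y : A} (h : x - y ∈ I) :
    circ x a - circ y a ∈ I := by
  have := hI.normal
  exact QuotientAddGroup.eq_iff_sub_mem.1 (hI.mk_circ_left a (QuotientAddGroup.eq_iff_sub_mem.2 h))

theorem IsIdeal.rho_mem (hI : IsIdeal I) (a : A) {x : A} (hx : x ∈ I) : rho a x ∈ I := by
  simpa [rho, zero_circ] using hI.circ_sub_circ_mem a (x := x) (y := 0) (by simpa using hx)

theorem IsIdeal.rd_mem (hI : IsIdeal I) {a b c : A} (h : a ∈ I ∨ b ∈ I ∨ c ∈ I) :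
    rd a b c ∈ I := by
  have := hI.normal
  rw [← QuotientAddGroup.eq_zero_iff]
  simp only [rd, QuotientAddGroup.mk_sub, QuotientAddGroup.mk_add]
  rcases h with ha | hb | hc
  · have ha : ((a : A) : A ⧸ I) = (0 : A) := (QuotientAddGroup.eq_zero_iff a).2 ha
    have hab : ((a + b : A) : A ⧸ I) = b := by
      rw [QuotientAddGroup.mk_add, ha, QuotientAddGroup.mk_zero, zero_add]
    rw [hI.mk_circ_left c hab, hI.mk_circ_left c ha, zero_circ]
    simp
  · have hb : ((b : A) : A ⧸ I) = (0 : A) := (QuotientAddGroup.eq_zero_iff b).2 hb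
    have hab : ((a + b : A) : A ⧸ I) = a := by
      rw [QuotientAddGroup.mk_add, hb, QuotientAddGroup.mk_zero, add_zero]
    rw [hI.mk_circ_left c hab, hI.mk_circ_left c hb, zero_circ]
    simp
  · have hc : ((c : A) : A ⧸ I) = (0 : A) := (QuotientAddGroup.eq_zero_iff c).2 hc
    rw [hI.mk_circ_right (a + b) hc, hI.mk_circ_right b hc, hI.mk_circ_right a hc, circ_zero,
      circ_zero, circ_zero, hc]
    simp [sub_eq_add_neg, add_assoc]

end Ideal

def radRngGenerators (I : AddSubgroup A) : Set A :=
  {x : A | ∃ a b c : A, (a ∈ I ∨ b ∈ I ∨ c ∈ I) ∧ x = rd a b c} ∪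
  {x : A | ∃ a ∈ I, ∃ b : A, x = a + b - a - b}

/-- `[I, A]_RadRng`. -/
def radRngBracket (I : AddSubgroup A) : AddSubgroup A :=
  AddSubgroup.closure (radRngGenerators I)

section RadRngBracket

variable {I : AddSubgroup A}

theorem rd_mem_radRngBracket {a b c : A} (h : a ∈ I ∨ b ∈ I ∨ c ∈ I) :
    rd a b c ∈ radRngBracket I :=
  AddSubgroup.subset_closure (Or.inl ⟨a, b, c, h, rfl⟩)

theorem commutator_mem_radRngBracket {a : A} (ha : a ∈ I) (b : A) :
    a + b - a - b ∈ radRngBracket I :=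
  AddSubgroup.subset_closure (Or.inr ⟨a, ha, b, rfl⟩)

theorem radRngBracket_le (hI : IsIdeal I) : radRngBracket I ≤ I := by
  rw [radRngBracket, AddSubgroup.closure_le]
  rintro x (⟨a, b, c, h, rfl⟩ | ⟨a, ha, b, rfl⟩)
  · exact hI.rd_mem h
  · have e : a + b - a - b = a - (b + a - b) := by simp [sub_eq_add_neg, add_assoc]
    exact e ▸ sub_mem ha (hI.1 b a ha)

theorem radRngBracket_normal (hI : IsIdeal I) : (radRngBracket I).Normal := by
  refine ⟨fun x hx g => ?_⟩
  have hc := commutator_mem_radRngBracket (neg_mem (radRngBracket_le hI hx)) g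
  have e : g + x + -g = x + (-x + g - -x - g) := by simp [sub_eq_add_neg, add_assoc]
  rw [e]
  exact add_mem hx hc

theorem lam_mem_radRngBracket (hI : IsIdeal I) (a : A) {s : A} (hs : s ∈ radRngGenerators I) :
    lam a s ∈ radRngBracket I := by
  have hN := radRngBracket_normal hI
  have conj_mem : ∀ n ∈ radRngBracket I, -a + (n + a) ∈ radRngBracket I := fun n hn => by
    simpa [add_assoc] using hN.conj_mem n hn (-a)
  rcases hs with ⟨b, c, d, h, rfl⟩ | ⟨i, hi, g, rfl⟩
  · rw [lam_apply]
    rcases h with hb | hc | hd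
    · have hp : circ a b - a ∈ I := by
        rw [circ_eq_add_lam]
        exact hI.1 a _ (hI.lam_mem a hb)
      rw [circ_rd]
      exact conj_mem _ (sub_mem (rd_mem_radRngBracket (Or.inl hp))
        (rd_mem_radRngBracket (Or.inl hp)))
    · have ht := hI.lam_mem a hc
      rw [circ_rd']
      exact conj_mem _ (add_mem (rd_mem_radRngBracket (Or.inr (Or.inl ht)))
        (hN.conj_mem _ (neg_mem (rd_mem_radRngBracket (Or.inr (Or.inl ht)))) _))
    · rw [circ_rd]
      exact conj_mem _ (sub_mem (rd_mem_radRngBracket (Or.inr (Or.inr hd)))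
        (rd_mem_radRngBracket (Or.inr (Or.inr hd))))
  · rw [map_sub, map_sub, map_add]
    exact commutator_mem_radRngBracket (hI.lam_mem a hi) _

theorem star_mem_radRngBracket_of_right_mem (hI : IsIdeal I) (a : A) {x : A}
    (hx : x ∈ radRngBracket I) : star a x ∈ radRngBracket I := by
  have hlam : radRngBracket I ≤ (radRngBracket I).comap (lam a) :=
    (AddSubgroup.closure_le _).2 fun s hs => lam_mem_radRngBracket hI a hs
  rw [star_eq_lam_sub]
  exact sub_mem (hlam hx) hx

end RadRngBracket

section Quotient

variable {I J : AddSubgroup A} [J.Normal]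

theorem mk_rd_eq_zero (hJ : radRngGenerators I ⊆ J) {x y z : A} (h : x ∈ I ∨ y ∈ I ∨ z ∈ I) :
    ((rd x y z : A) : A ⧸ J) = 0 :=
  (QuotientAddGroup.eq_zero_iff _).2 (hJ (Or.inl ⟨x, y, z, h, rfl⟩))

theorem addCommute_mk_of_mem (hJ : radRngGenerators I ⊆ J) {i : A} (hi : i ∈ I) (v : A ⧸ J) :
    AddCommute (i : A ⧸ J) v := by
  refine QuotientAddGroup.induction_on v fun g => ?_
  have h : ((i + g - i - g : A) : A ⧸ J) = 0 :=
    (QuotientAddGroup.eq_zero_iff _).2 (hJ (Or.inr ⟨i, hi, g, rfl⟩))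
  rwa [QuotientAddGroup.mk_sub, QuotientAddGroup.mk_sub, QuotientAddGroup.mk_add, sub_eq_zero,
    sub_eq_iff_eq_add] at h

theorem mk_rho_add (hJ : radRngGenerators I ⊆ J) (a : A) {x y : A} (h : x ∈ I ∨ y ∈ I) :
    ((rho a (x + y) : A) : A ⧸ J) = rho a x + rho a y := by
  rw [rho_add, QuotientAddGroup.mk_add, QuotientAddGroup.mk_add,
    mk_rd_eq_zero hJ (h.imp_right Or.inl), zero_add]

theorem mk_rho_sub (hJ : radRngGenerators I ⊆ J) (a : A) {x y : A} (h : x - y ∈ I) :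
    ((rho a (x - y) : A) : A ⧸ J) = rho a x - rho a y :=
  eq_sub_of_add_eq (by rw [← mk_rho_add hJ a (Or.inl h), sub_add_cancel])

theorem mk_rho_conj (hI : IsIdeal I) (hJ : radRngGenerators I ⊆ J) (a : A) {r : A} (hr : r ∈ I)
    (w : A) : ((rho a (w + r - w) : A) : A ⧸ J) = rho a w + rho a r - rho a w :=
  eq_sub_of_add_eq (by
    rw [← mk_rho_add hJ a (Or.inl (hI.1 w r hr)), sub_add_cancel, mk_rho_add hJ a (Or.inr hr)])

theorem mk_lam_add_left (hI : IsIdeal I) (hJ : radRngGenerators I ⊆ J) {h : A} (hh : h ∈ I)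
    (x y : A) : ((lam (x + y) h : A) : A ⧸ J) = lam x h - h + lam y h := by
  have hrd : ((-(x + y) + rd x y h + (x + y) : A) : A ⧸ J) = 0 := by
    rw [QuotientAddGroup.eq_zero_iff]
    have hmem : rd x y h ∈ J := hJ (Or.inl ⟨x, y, h, Or.inr (Or.inr hh), rfl⟩)
    simpa using (inferInstance : J.Normal).conj_mem _ hmem (-(x + y))
  have hconj : ((-y + (lam x h - h) + y : A) : A ⧸ J) = ((lam x h - h : A) : A ⧸ J) := by
    rw [QuotientAddGroup.mk_add, QuotientAddGroup.mk_add, QuotientAddGroup.mk_neg]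
    exact (addCommute_mk_of_mem hJ (sub_mem (hI.lam_mem x hh) hh) _).symm.neg_add_cancel
  rw [lam_add_left, QuotientAddGroup.mk_add, QuotientAddGroup.mk_add, hrd, hconj, zero_add,
    QuotientAddGroup.mk_sub]

theorem mk_rho_lam (hI : IsIdeal I) (hJ : radRngGenerators I ⊆ J) (a : A) {d : A} (hd : d ∈ I)
    (x : A) : ((rho a (lam x d) : A) : A ⧸ J) = lam x (rho a d) := by
  have hL := addCommute_mk_of_mem hJ (hI.lam_mem x (hI.rho_mem a hd))
  have h1 : ((rho a (circ x d) : A) : A ⧸ J) = rho a x + rho a (lam x d) := by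
    rw [circ_eq_add_lam]
    exact mk_rho_add hJ a (Or.inr (hI.lam_mem x hd))
  have h2 : ((rho a (circ x d) : A) : A ⧸ J) = rho a x + lam x (rho a d) := by
    rw [rho_circ, QuotientAddGroup.mk_add, QuotientAddGroup.mk_sub, QuotientAddGroup.mk_add,
      sub_eq_add_neg, (hL _).symm.add_neg_cancel, (hL _).eq]
  exact add_left_cancel (h1.symm.trans h2)

theorem mk_rho_rd_of_left_mem (hI : IsIdeal I) (hJ : radRngGenerators I ⊆ J) (a : A) {b : A}
    (hb : b ∈ I) (c d : A) : ((rho a (rd b c d) : A) : A ⧸ J) = 0 := by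
  have hX : circ (b + c) d - circ c d ∈ I := hI.circ_sub_circ_mem d (by simpa using hb)
  have hW : circ 0 d - circ b d ∈ I := hI.circ_sub_circ_mem d (by simpa using hb)
  rw [zero_circ] at hW
  calc ((rho a (rd b c d) : A) : A ⧸ J)
      = rho a ((circ (b + c) d - circ c d) + (d - circ b d)) := by
        simp only [rd, sub_eq_add_neg, add_assoc]
    _ = rho a (circ (b + c) d) - rho a (circ c d) + (rho a d - rho a (circ b d)) := by
        rw [mk_rho_add hJ a (Or.inl hX), mk_rho_sub hJ a hX, mk_rho_sub hJ a hW]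
    _ = rd b c (circ d a) := by
        simp [rd_circ_right, sub_eq_add_neg, add_assoc]
    _ = 0 := mk_rd_eq_zero hJ (Or.inl hb)

theorem mk_rho_rd_of_mid_mem (hI : IsIdeal I) (hJ : radRngGenerators I ⊆ J) (a : A) {c : A}
    (hc : c ∈ I) (b d : A) : ((rho a (rd b c d) : A) : A ⧸ J) = 0 := by
  have := hI.normal
  have hX : circ (b + c) d - circ b d ∈ I :=
    hI.circ_sub_circ_mem d (by simpa [sub_eq_add_neg] using hI.1 b c hc)
  have hR : -circ c d + d ∈ I := by
    have h : circ 0 d - circ c d ∈ I := hI.circ_sub_circ_mem d (by simpa using hc)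
    rw [zero_circ, sub_eq_add_neg] at h
    exact this.mem_comm h
  have hρR : ((rho a (-circ c d + d) : A) : A ⧸ J) = -rho a (circ c d) + rho a d := by
    refine eq_neg_add_of_add_eq ?_
    rw [← mk_rho_add hJ a (Or.inr hR), add_neg_cancel_left]
  calc ((rho a (rd b c d) : A) : A ⧸ J)
      = rho a ((circ (b + c) d - circ b d) + (circ b d + (-circ c d + d) - circ b d)) := by
        simp only [rd, sub_eq_add_neg, add_assoc, neg_add_cancel_left]
    _ = rho a (circ (b + c) d) - rho a (circ b d) +
          (rho a (circ b d) + (-rho a (circ c d) + rho a d) - rho a (circ b d)) := by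
        rw [mk_rho_add hJ a (Or.inl hX), mk_rho_sub hJ a hX, mk_rho_conj hI hJ a hR, hρR]
    _ = rd b c (circ d a) := by
        simp [rd_circ_right, sub_eq_add_neg, add_assoc]
    _ = 0 := mk_rd_eq_zero hJ (Or.inr (Or.inl hc))

theorem mk_rho_rd_of_right_mem (hI : IsIdeal I) (hJ : radRngGenerators I ⊆ J) (a : A) {d : A}
    (hd : d ∈ I) (b c : A) : ((rho a (rd b c d) : A) : A ⧸ J) = 0 := by
  have h₁ : lam (b + c) d - lam c d ∈ I := sub_mem (hI.lam_mem _ hd) (hI.lam_mem _ hd)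
  have h₂ : d - lam b d ∈ I := sub_mem hd (hI.lam_mem _ hd)
  have hv : lam b (rho a d) - rho a d ∈ I :=
    sub_mem (hI.lam_mem _ (hI.rho_mem a hd)) (hI.rho_mem a hd)
  have hv' := addCommute_mk_of_mem hJ hv
  rw [rd_eq_conj_add_conj, mk_rho_add hJ a (Or.inl (hI.1 _ _ h₁)), mk_rho_conj hI hJ a h₁,
    mk_rho_conj hI hJ a h₂, mk_rho_sub hJ a h₁, mk_rho_sub hJ a h₂, mk_rho_lam hI hJ a hd,
    mk_rho_lam hI hJ a hd, mk_rho_lam hI hJ a hd, mk_lam_add_left hI hJ (hI.rho_mem a hd)]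
  have e₁ : ((lam b (rho a d) : A) : A ⧸ J) - rho a d + lam c (rho a d) - lam c (rho a d) =
      ((lam b (rho a d) - rho a d : A) : A ⧸ J) := by simp
  have e₂ : ((rho a d : A) : A ⧸ J) - lam b (rho a d) =
      -((lam b (rho a d) - rho a d : A) : A ⧸ J) := by simp
  rw [e₁, e₂, ← (hv' _).eq, add_sub_cancel_right, ← (hv' _).neg_left.eq, add_sub_cancel_right,
    add_neg_cancel]

theorem mk_rho_eq_zero_of_mem_generators (hI : IsIdeal I) (hJ : radRngGenerators I ⊆ J) (a : A)
    {s : A} (hs : s ∈ radRngGenerators I) : ((rho a s : A) : A ⧸ J) = 0 := by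
  rcases hs with ⟨b, c, d, hb | hc | hd, rfl⟩ | ⟨i, hi, g, rfl⟩
  · exact mk_rho_rd_of_left_mem hI hJ a hb c d
  · exact mk_rho_rd_of_mid_mem hI hJ a hc b d
  · exact mk_rho_rd_of_right_mem hI hJ a hd b c
  · have e : i + g - i - g = i - (g + i - g) := by simp [sub_eq_add_neg, add_assoc]
    rw [e, mk_rho_sub hJ a (sub_mem hi (hI.1 g i hi)), mk_rho_conj hI hJ a hi,
      ← (addCommute_mk_of_mem hJ (hI.rho_mem a hi) _).eq, add_sub_cancel_right, sub_self]

end Quotient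

theorem star_mem_radRngBracket_of_left_mem {I : AddSubgroup A} (hI : IsIdeal I) (a : A) {x : A}
    (hx : x ∈ radRngBracket I) : star x a ∈ radRngBracket I := by
  have := radRngBracket_normal hI
  have hJ : radRngGenerators I ⊆ radRngBracket I := AddSubgroup.subset_closure
  have hρ : ((rho a x : A) : A ⧸ radRngBracket I) = 0 := by
    induction hx using AddSubgroup.closure_induction with
    | mem s hs => exact mk_rho_eq_zero_of_mem_generators hI hJ a hs
    | zero => simp [rho, zero_circ]
    | add x y hx _ ihx ihy =>
      rw [mk_rho_add hJ a (Or.inl (radRngBracket_le hI hx)), ihx, ihy, add_zero]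
    | neg x hx ihx =>
      have h := mk_rho_add hJ a (x := x) (y := -x) (Or.inl (radRngBracket_le hI hx))
      rwa [add_neg_cancel, ihx, zero_add, rho, zero_circ, sub_self, QuotientAddGroup.mk_zero,
        eq_comm] at h
  rw [star_eq_neg_add_rho]
  exact add_mem (neg_mem hx) ((QuotientAddGroup.eq_zero_iff _).1 hρ)

theorem isIdeal_radRngBracket {I : AddSubgroup A} (hI : IsIdeal I) : IsIdeal (radRngBracket I) :=
  ⟨fun a x hx => by simpa only [sub_eq_add_neg] using (radRngBracket_normal hI).conj_mem x hx a,
    fun a _ hx => star_mem_radRngBracket_of_right_mem hI a hx,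
    fun a _ hx => star_mem_radRngBracket_of_left_mem hI a hx⟩

end SkewBrace

theorem stmt5 {A : Type*} [SkewBrace A] (I : AddSubgroup A) (hI : IsIdeal I) :
    IsIdeal (AddSubgroup.closure
      ({x : A | ∃ a b c : A, (a ∈ I ∨ b ∈ I ∨ c ∈ I) ∧ x = rd a b c} ∪
       {x : A | ∃ a ∈ I, ∃ b : A, x = a + b - a - b})) :=
  isIdeal_radRngBracket hI
end

section
/- Let A be a skew brace and z ∈ Z_R(A). Then [z+a, b, c] = [a, z+b, c] = [a, b, z+c] = [a,b,c] for all a, b, c ∈ A. -/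
open SkewBrace

section CentralArithmetic

variable {G : Type*} [AddGroup G]

lemma mem_center_of_add_eq_add {w w' : G} (h : ∀ x, w + x = x + w') :
    w ∈ AddSubgroup.center G := by
  obtain rfl : w = w' := by simpa using h 0
  exact AddSubgroup.mem_center_iff.mpr fun x => (h x).symm

lemma add_add_add_of_mem_center {s : G} (hs : s ∈ AddSubgroup.center G) (p P C : G) :
    p + P + (s + C) = p + s + (P + C) :=
  AddCommute.add_add_add_comm (AddSubgroup.mem_center_iff.mp hs P) p C

lemma add_sub_add_of_mem_center {q : G} (hq : q ∈ AddSubgroup.center G) (p P Q : G) :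
    p + P - (q + Q) = p - q + (P - Q) := by
  rw [sub_eq_add_neg, neg_add_rev, AddSubgroup.mem_center_iff.mp (neg_mem hq) (-Q),
    add_add_add_of_mem_center (neg_mem hq), ← sub_eq_add_neg, ← sub_eq_add_neg]

lemma add_sub_add_add_add_sub_add_of_mem_center {p q s r : G}
    (hq : q ∈ AddSubgroup.center G) (hs : s ∈ AddSubgroup.center G)
    (hr : r ∈ AddSubgroup.center G) (h : p - q + s - r = 0) (P Q C R : G) :
    p + P - (q + Q) + (s + C) - (r + R) = P - Q + C - R := by
  rw [add_sub_add_of_mem_center hq, add_add_add_of_mem_center hs,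
    add_sub_add_of_mem_center hr, h, zero_add]

end CentralArithmetic

namespace SkewBrace

variable {A : Type*} [SkewBrace A]

lemma circ_add_eq_of_rd_eq_zero {x y w : A} (h : rd x y w = 0) :
    circ (x + y) w = circ x w - w + circ y w :=
  eq_add_of_sub_eq (eq_sub_of_add_eq (sub_eq_zero.mp h))

lemma circ_left_surjective (c : A) : Function.Surjective fun x => circ x c :=
  fun x => ⟨circ x (cinv c), by dsimp only; rw [circ_assoc, cinv_circ, circ_zero]⟩

lemma circ_right_surjective (a : A) : Function.Surjective (circ a) :=
  fun x => ⟨circ (cinv a) x, by rw [← circ_assoc, circ_cinv, zero_circ]⟩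

lemma circ_sub_left_mem_center {z : A} (hz : z ∈ AddSubgroup.center A) (a : A) :
    circ a z - a ∈ AddSubgroup.center A := by
  refine mem_center_of_add_eq_add (w' := -a + circ a z) fun x => ?_
  obtain ⟨y, rfl⟩ := circ_right_surjective a x
  calc circ a z - a + circ a y = circ a (z + y) := (compat a z y).symm
    _ = circ a (y + z) := by rw [AddSubgroup.mem_center_iff.mp hz y]
    _ = circ a y + (-a + circ a z) := by rw [compat, sub_eq_add_neg, add_assoc]

lemma circ_sub_right_mem_center {z c : A} (hz : z ∈ AddSubgroup.center A)
    (hzy : ∀ y, rd z y c = 0) (hyz : ∀ y, rd y z c = 0) :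
    circ z c - c ∈ AddSubgroup.center A := by
  refine mem_center_of_add_eq_add (w' := -c + circ z c) fun x => ?_
  obtain ⟨y, rfl⟩ := circ_left_surjective c x
  calc circ z c - c + circ y c = circ (z + y) c := (circ_add_eq_of_rd_eq_zero (hzy y)).symm
    _ = circ (y + z) c := by rw [AddSubgroup.mem_center_iff.mp hz y]
    _ = circ y c + (-c + circ z c) := by
      rw [circ_add_eq_of_rd_eq_zero (hyz y), sub_eq_add_neg, add_assoc]

lemma mem_center_of_mem_ZR {z : A} (hz : z ∈ ZR A) : z ∈ AddSubgroup.center A :=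
  AddSubgroup.mem_center_iff.mpr fun a => (hz.1 a).symm

lemma circ_sub_right_mem_center_of_mem_ZR {z : A} (hz : z ∈ ZR A) (c : A) :
    circ z c - c ∈ AddSubgroup.center A :=
  circ_sub_right_mem_center (mem_center_of_mem_ZR hz) (fun y => (hz.2 y c).1)
    (fun y => (hz.2 y c).2.1)

lemma rd_add_left_of_mem_ZR {z : A} (hz : z ∈ ZR A) (a b c : A) :
    rd (z + a) b c = rd a b c := by
  have hw := circ_sub_right_mem_center_of_mem_ZR hz c
  have shift (y : A) := circ_add_eq_of_rd_eq_zero (hz.2 y c).1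
  rw [rd, rd, add_assoc, shift, shift]
  simpa using add_sub_add_add_add_sub_add_of_mem_center (zero_mem _) (zero_mem _) hw
    (by simp) (circ (a + b) c) (circ b c) c (circ a c)

lemma rd_add_mid_of_mem_ZR {z : A} (hz : z ∈ ZR A) (a b c : A) :
    rd a (z + b) c = rd a b c := by
  have hw := circ_sub_right_mem_center_of_mem_ZR hz c
  have shift (y : A) := circ_add_eq_of_rd_eq_zero (hz.2 y c).1
  rw [rd, rd, ← add_assoc, ← hz.1 a, add_assoc, shift, shift]
  simpa using add_sub_add_add_add_sub_add_of_mem_center hw (zero_mem _) (zero_mem _)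
    (by simp) (circ (a + b) c) (circ b c) c (circ a c)

lemma rd_add_right_of_mem_ZR {z : A} (hz : z ∈ ZR A) (a b c : A) :
    rd a b (z + c) = rd a b c := by
  have hzc := mem_center_of_mem_ZR hz
  have hua := circ_sub_left_mem_center hzc a
  have hub := circ_sub_left_mem_center hzc b
  have hzub : -z + (circ b z - b) ∈ AddSubgroup.center A := add_mem (neg_mem hzc) hub
  have hu_add : circ (a + b) z - (a + b) = circ a z - a + (-z + (circ b z - b)) := by
    calc circ (a + b) z - (a + b) = circ a z + (-z + (circ b z - b)) - a := by
          rw [circ_add_eq_of_rd_eq_zero (hz.2 a b).2.2]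
          simp only [sub_eq_add_neg, neg_add_rev, add_assoc]
      _ = circ a z - a + (-z + (circ b z - b)) := by
          rw [sub_eq_add_neg, add_assoc, ← AddSubgroup.mem_center_iff.mp hzub (-a), ← add_assoc,
            ← sub_eq_add_neg]
  rw [rd, rd, compat, compat b, compat a]
  refine add_sub_add_add_add_sub_add_of_mem_center hub hzc hua ?_ _ _ _ _
  simp [hu_add, sub_eq_add_neg, add_assoc]

end SkewBrace

theorem stmt6 {A : Type*} [SkewBrace A] (z : A) (hz : z ∈ ZR A) (a b c : A) :
    rd (z + a) b c = rd a b c ∧ rd a (z + b) c = rd a b c ∧ rd a b (z + c) = rd a b c :=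
  ⟨rd_add_left_of_mem_ZR hz a b c, rd_add_mid_of_mem_ZR hz a b c,
    rd_add_right_of_mem_ZR hz a b c⟩
end

section
/- Let A be a skew brace. Then Z_R(A) = { z ∈ Z(A,+) : [z,b,c] = [b,z,c] = [b,c,z] = 0 for all b,c ∈ A } is a subbrace of A, i.e., it is a subgroup of both (A,+) and (A,∘). -/
open SkewBrace

namespace SB7

variable {A : Type*} [SkewBrace A]

/-- additively central element -/
def C (t : A) : Prop := ∀ a : A, t + a = a + t

lemma C.left_comm {t : A} (h : C t) (a b : A) : a + (t + b) = t + (a + b) := by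
  rw [← add_assoc, ← h a, add_assoc]

lemma C.zero : C (0 : A) := fun a => by rw [zero_add, add_zero]

lemma C.add {t s : A} (ht : C t) (hs : C s) : C (t + s) := fun a => by
  rw [add_assoc, hs a, ← add_assoc, ht a, add_assoc]

lemma C.neg {t : A} (h : C t) : C (-t) := fun a => by
  have h1 : -t + (t + a) + -t = -t + (a + t) + -t := by rw [h a]
  rw [neg_add_cancel_left, add_assoc, add_assoc, add_neg_cancel, add_zero] at h1
  exact h1.symm

lemma C.sub_helper {x c : A} (h : C (x - c)) : -c + x = x - c := by
  have h1 := h c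
  rw [sub_add_cancel] at h1
  conv_lhs => rw [h1]
  rw [neg_add_cancel_left]

lemma solve1 {P Q X Y : A} (e : Y = P - Q + X) : X = Q - P + Y := by
  rw [e, ← neg_sub P Q, neg_add_cancel_left]

def R1 (z : A) : Prop := ∀ b c : A, circ (z + b) c = circ z c - c + circ b c
def R2 (z : A) : Prop := ∀ b c : A, circ (b + z) c = circ b c - c + circ z c
def R3 (z : A) : Prop := ∀ b c : A, circ (b + c) z = circ b z - z + circ c z

lemma rd_zero_iff (a b c : A) :
    rd a b c = 0 ↔ circ (a + b) c = circ a c - c + circ b c := by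
  unfold rd
  rw [sub_eq_zero]
  constructor
  · intro h; rw [← h, add_sub_cancel_right, sub_add_cancel]
  · intro h; rw [h, add_sub_cancel_right, sub_add_cancel]

lemma mem_ZR_iff {z : A} : z ∈ ZR A ↔ C z ∧ R1 z ∧ R2 z ∧ R3 z := by
  simp only [ZR, Set.mem_setOf_eq]
  constructor
  · rintro ⟨hc, h⟩
    exact ⟨hc, fun b c => (rd_zero_iff _ _ _).mp (h b c).1,
           fun b c => (rd_zero_iff _ _ _).mp (h b c).2.1,
           fun b c => (rd_zero_iff _ _ _).mp (h b c).2.2⟩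
  · rintro ⟨hc, h1, h2, h3⟩
    exact ⟨hc, fun b c => ⟨(rd_zero_iff _ _ _).mpr (h1 b c),
           (rd_zero_iff _ _ _).mpr (h2 b c), (rd_zero_iff _ _ _).mpr (h3 b c)⟩⟩

lemma circ_neg' (a b : A) : circ a (-b) = a - circ a b + a := by
  have h := compat a b (-b)
  rw [add_neg_cancel, circ_zero] at h
  exact solve1 h

lemma neg_add_circ {z : A} (h1 : R1 z) (b c : A) :
    circ (-z + b) c = c - circ z c + circ b c := by
  have h := h1 (-z + b) c
  rw [add_neg_cancel_left] at h
  exact solve1 h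

lemma neg_circ_right {z : A} (h3 : R3 z) (a : A) :
    circ (-a) z = z - circ a z + z := by
  have h := h3 a (-a)
  rw [add_neg_cancel, zero_circ] at h
  exact solve1 h

/-- L1: if `z` is additively central then `c ∘ z - c` is central, for all `c`. -/
lemma central_right {z : A} (hz : C z) (c : A) : C (circ c z - c) := by
  have key : ∀ x : A, circ c z - c + circ c x = circ c x - c + circ c z := by
    intro x
    have h1 := compat c z x
    have h2 := compat c x z
    rw [hz x] at h1
    exact h1.symm.trans h2
  have base : circ c z - c = -c + circ c z := by
    have hb := key (cinv c)
    rw [circ_cinv, add_zero, zero_sub] at hb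
    exact hb
  intro a
  have ha : circ c (circ (cinv c) a) = a := by
    rw [← circ_assoc, circ_cinv, zero_circ]
  have hk := key (circ (cinv c) a)
  rw [ha] at hk
  rw [hk, sub_eq_add_neg a c, add_assoc, ← base]

/-- L2: if `z ∈ Z_R`-style (central + R1 + R2) then `z ∘ c - c` is central. -/
lemma central_left {z : A} (hz : C z) (h1 : R1 z) (h2 : R2 z) (c : A) :
    C (circ z c - c) := by
  have key : ∀ b : A, circ z c - c + circ b c = circ b c - c + circ z c := by
    intro b
    have ha := h1 b c
    rw [hz b] at ha
    exact ha.symm.trans (h2 b c)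
  have base : circ z c - c = -c + circ z c := by
    have hb := key (cinv c)
    rw [cinv_circ, add_zero, zero_sub] at hb
    exact hb
  intro a
  have ha : circ (circ a (cinv c)) c = a := by
    rw [circ_assoc, cinv_circ, circ_zero]
  have hk := key (circ a (cinv c))
  rw [ha] at hk
  rw [hk, sub_eq_add_neg a c, add_assoc, ← base]

lemma R2_of_R1 {u : A} (hu : C u) (h1 : R1 u) (hc : ∀ c : A, C (circ u c - c)) :
    R2 u := by
  intro b c
  rw [← hu b, h1 b c]
  rw [(hc c) (circ b c), sub_eq_add_neg (circ b c) c,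
      add_assoc, (hc c).sub_helper]

end SB7

open SB7

theorem stmt7 {A : Type*} [SkewBrace A] :
    (0 : A) ∈ ZR A ∧
    (∀ z ∈ ZR A, ∀ w ∈ ZR A, z + w ∈ ZR A) ∧
    (∀ z ∈ ZR A, -z ∈ ZR A) ∧
    (∀ z ∈ ZR A, ∀ w ∈ ZR A, SkewBrace.circ z w ∈ ZR A) ∧
    (∀ z ∈ ZR A, SkewBrace.cinv z ∈ ZR A) := by
  refine ⟨?_, ?_, ?_, ?_, ?_⟩
  · -- zero
    rw [mem_ZR_iff]
    refine ⟨C.zero, ?_, ?_, ?_⟩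
    · intro b c; rw [zero_add, zero_circ, sub_self, zero_add]
    · intro b c; rw [add_zero, zero_circ, sub_add_cancel]
    · intro b c; rw [circ_zero, circ_zero, circ_zero, sub_zero]
  · -- add
    intro z hz0 w hw0
    rw [mem_ZR_iff] at hz0 hw0 ⊢
    obtain ⟨hz, hz1, hz2, hz3⟩ := hz0
    obtain ⟨hw, hw1, hw2, hw3⟩ := hw0
    refine ⟨hz.add hw, ?_, ?_, ?_⟩
    · intro b c
      rw [add_assoc z w b, hz1 (w + b) c, hw1 b c, hz1 w c]
      simp only [sub_eq_add_neg, add_assoc]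
    · intro b c
      rw [← add_assoc b z w, hw2 (b + z) c, hz2 b c, hz1 w c]
      simp only [sub_eq_add_neg, add_assoc]
    · intro b c
      obtain ⟨p, hp, e1⟩ : ∃ p : A, C p ∧ circ c z = p + c :=
        ⟨_, central_right hz c, (sub_add_cancel _ _).symm⟩
      obtain ⟨q, hq, e2⟩ : ∃ q : A, C q ∧ circ b w = q + b :=
        ⟨_, central_right hw b, (sub_add_cancel _ _).symm⟩
      rw [compat, compat, compat, hz3 b c, hw3 b c, e1, e2]
      simp only [sub_eq_add_neg, neg_add_rev, add_assoc, neg_add_cancel_left,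
        add_neg_cancel_left]
      try simp only [hp.left_comm, neg_add_cancel_left, add_neg_cancel_left]
      try simp only [hq.left_comm, neg_add_cancel_left, add_neg_cancel_left]
      try simp only [hz.neg.left_comm, neg_add_cancel_left, add_neg_cancel_left]
      try simp only [hw.neg.left_comm, neg_add_cancel_left, add_neg_cancel_left]
  · -- neg
    intro z hz0
    rw [mem_ZR_iff] at hz0 ⊢
    obtain ⟨hz, hz1, hz2, hz3⟩ := hz0
    have hnc : ∀ c : A, circ (-z) c = c - circ z c + c := by
      intro c
      have h := hz1 (-z) c
      rw [add_neg_cancel, zero_circ] at h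
      exact solve1 h
    refine ⟨hz.neg, ?_, ?_, ?_⟩
    · intro b c
      rw [neg_add_circ hz1 b c, hnc c]
      simp only [sub_eq_add_neg, add_assoc, neg_add_cancel_left, add_neg_cancel_left]
    · intro b c
      have h := hz2 (b + -z) c
      rw [add_assoc, neg_add_cancel, add_zero] at h
      have hx : circ (b + -z) c = circ b c - circ z c + c := by
        rw [h, add_sub_cancel_right, sub_add_cancel]
      rw [hx, hnc c]
      simp only [sub_eq_add_neg, add_assoc, neg_add_cancel_left, add_neg_cancel_left]
    · intro b c
      obtain ⟨p, hp, e1⟩ : ∃ p : A, C p ∧ circ c z = p + c :=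
        ⟨_, central_right hz c, (sub_add_cancel _ _).symm⟩
      obtain ⟨q, hq, e2⟩ : ∃ q : A, C q ∧ circ b z = q + b :=
        ⟨_, central_right hz b, (sub_add_cancel _ _).symm⟩
      rw [circ_neg', circ_neg', circ_neg', hz3 b c, e1, e2]
      simp only [sub_eq_add_neg, neg_add_rev, neg_neg, add_assoc, neg_add_cancel_left,
        add_neg_cancel_left]
      try simp only [hp.neg.left_comm, neg_add_cancel_left, add_neg_cancel_left]
      try simp only [hq.neg.left_comm, neg_add_cancel_left, add_neg_cancel_left]
      try simp only [hz.left_comm, neg_add_cancel_left, add_neg_cancel_left]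
  · -- circ
    intro z hz0 w hw0
    rw [mem_ZR_iff] at hz0 hw0 ⊢
    obtain ⟨hz, hz1, hz2, hz3⟩ := hz0
    obtain ⟨hw, hw1, hw2, hw3⟩ := hw0
    have hcent : C (circ z w) := by
      have h := (central_left hz hz1 hz2 w).add hw
      rwa [sub_add_cancel] at h
    have hR1 : R1 (circ z w) := by
      intro b c
      have hzy : circ z (circ (cinv z) (z + b)) = z + b := by
        rw [← circ_assoc, circ_cinv, zero_circ]
      set y := circ (cinv z) (z + b) with hy
      have hb : b = -z + circ z y := by rw [hzy, neg_add_cancel_left]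
      have key : circ z w + b = circ z (w + y) := by
        rw [compat, hzy, ← add_assoc, sub_add_cancel]
      have hbc : circ b c = c - circ z c + circ z (circ y c) := by
        conv_lhs => rw [hb]
        rw [neg_add_circ hz1, circ_assoc]
      rw [key, circ_assoc, hw1 y c, compat, sub_eq_add_neg (circ w c) c, compat,
          circ_neg', circ_assoc z w c, hbc]
      simp only [sub_eq_add_neg, add_assoc, neg_add_cancel_left, add_neg_cancel_left]
    refine ⟨hcent, hR1, ?_, ?_⟩
    · refine R2_of_R1 hcent hR1 ?_
      intro c
      have h3 := (central_left hz hz1 hz2 (circ w c)).add (central_left hw hw1 hw2 c)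
      rwa [sub_add_sub_cancel, ← circ_assoc] at h3
    · intro b c
      rw [← circ_assoc (b + c) z w, hz3 b c, hw3 (circ b z - z) (circ c z),
          sub_eq_add_neg (circ b z) z, hw3 (circ b z) (-z), neg_circ_right hw3 z,
          circ_assoc b z w, circ_assoc c z w]
      simp only [sub_eq_add_neg, add_assoc, neg_add_cancel_left, add_neg_cancel_left]
  · -- cinv
    intro z hz0
    rw [mem_ZR_iff] at hz0 ⊢
    obtain ⟨hz, hz1, hz2, hz3⟩ := hz0
    have unfold_l : ∀ x : A, circ (cinv z) (circ z x) = x := fun x => by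
      rw [← circ_assoc, cinv_circ, zero_circ]
    have fold_r : ∀ x : A, circ (circ x (cinv z)) z = x := fun x => by
      rw [circ_assoc, cinv_circ, circ_zero]
    have fold_r2 : ∀ x : A, circ (circ x z) (cinv z) = x := fun x => by
      rw [circ_assoc, circ_cinv, circ_zero]
    have hCv : C (cinv z) := by
      have h := central_left hz hz1 hz2 (cinv z)
      rw [circ_cinv, zero_sub] at h
      have h2 := h.neg
      rwa [neg_neg] at h2
    have hR1 : R1 (cinv z) := by
      intro b c
      have key : circ z (circ (cinv z + b) c) = circ z (circ (cinv z) c - c + circ b c) := by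
        rw [← circ_assoc z (cinv z + b) c, compat z (cinv z) b, circ_cinv, zero_sub,
            neg_add_circ hz1 (circ z b) c, circ_assoc z b c,
            compat z (circ (cinv z) c - c) (circ b c),
            sub_eq_add_neg (circ (cinv z) c) c, compat z (circ (cinv z) c) (-c),
            ← circ_assoc z (cinv z) c, circ_cinv, zero_circ, circ_neg' z c]
        simp only [sub_eq_add_neg, add_assoc, neg_add_cancel_left, add_neg_cancel_left]
      calc circ (cinv z + b) c
          = circ (cinv z) (circ z (circ (cinv z + b) c)) := (unfold_l _).symm
        _ = circ (cinv z) (circ z (circ (cinv z) c - c + circ b c)) := by rw [key]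
        _ = circ (cinv z) c - c + circ b c := unfold_l _
    have hR3 : R3 (cinv z) := by
      intro b c
      have key : circ (circ (b + c) (cinv z)) z
          = circ (circ b (cinv z) - cinv z + circ c (cinv z)) z := by
        rw [fold_r (b + c), hz3 (circ b (cinv z) - cinv z) (circ c (cinv z)),
            sub_eq_add_neg (circ b (cinv z)) (cinv z),
            hz3 (circ b (cinv z)) (-(cinv z)), neg_circ_right hz3 (cinv z),
            cinv_circ, fold_r b, fold_r c]
        simp only [sub_zero, sub_eq_add_neg, add_assoc, neg_add_cancel_left,
          add_neg_cancel_left, neg_zero, zero_add]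
      calc circ (b + c) (cinv z)
          = circ (circ (circ (b + c) (cinv z)) z) (cinv z) := (fold_r2 _).symm
        _ = circ (circ (circ b (cinv z) - cinv z + circ c (cinv z)) z) (cinv z) := by rw [key]
        _ = circ b (cinv z) - cinv z + circ c (cinv z) := fold_r2 _
    have hcv : ∀ c : A, C (circ (cinv z) c - c) := by
      intro c
      have h := central_left hz hz1 hz2 (circ (cinv z) c)
      rw [← circ_assoc, circ_cinv, zero_circ] at h
      have h2 := h.neg
      rwa [neg_sub] at h2
    exact ⟨hCv, hR1, R2_of_R1 hCv hR1 hcv, hR3⟩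
end

section
/- Let A be a skew brace and k, k₁ ∈ Z_R(A). Then k ∘ k₁' is central in (A,+), where k₁' denotes the ∘-inverse of k₁. -/
open SkewBrace

/-- For `z ∈ Z_R(A)` and any `c`, `circ z c - c + d = d - c + circ z c`. -/
lemma zr_key {A : Type*} [SkewBrace A] {z : A} (hz : z ∈ ZR A) (c d : A) :
    circ z c - c + d = d - c + circ z c := by
  set b' : A := circ d (cinv c) with hb'
  have hbc : circ b' c = d := by
    rw [hb', circ_assoc, cinv_circ, circ_zero]
  have h1 : rd z b' c = 0 := (hz.2 b' c).1
  have h2 : rd b' z c = 0 := (hz.2 b' c).2.1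
  have hcomm : z + b' = b' + z := hz.1 b'
  unfold rd at h1 h2
  rw [hbc] at h1 h2
  rw [hcomm] at h1
  -- h1 : circ (b' + z) c - d + c - circ z c = 0
  -- h2 : circ (b' + z) c - circ z c + c - d = 0
  have e1 : circ (b' + z) c = circ z c - c + d := by
    have := h1
    rw [sub_eq_zero] at this
    -- this : circ (b' + z) c - d + c = circ z c
    have := congrArg (· + (-c + d)) this
    simpa [add_assoc, sub_eq_add_neg] using this
  have e2 : circ (b' + z) c = d - c + circ z c := by
    rw [sub_eq_zero] at h2
    have := congrArg (· + (-c + circ z c)) h2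
    simpa [add_assoc, sub_eq_add_neg] using this
  rw [← e1, e2]

/-- For `z ∈ Z_R(A)` and any `c`, the element `-c + circ z c` is additively central. -/
lemma zr_central {A : Type*} [SkewBrace A] {z : A} (hz : z ∈ ZR A) (c b : A) :
    (-c + circ z c) + b = b + (-c + circ z c) := by
  have h0 : circ z c + -c = -c + circ z c := by
    have := zr_key hz c 0
    simpa [sub_eq_add_neg] using this
  have hb : circ z c + -c + b = b + -c + circ z c := by
    have := zr_key hz c b
    simpa [sub_eq_add_neg] using this
  calc (-c + circ z c) + b = circ z c + -c + b := by rw [h0]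
    _ = b + -c + circ z c := hb
    _ = b + (-c + circ z c) := by rw [add_assoc]

theorem stmt8 {A : Type*} [SkewBrace A] (k k₁ : A) (hk : k ∈ ZR A) (hk₁ : k₁ ∈ ZR A)
    (b : A) :
    SkewBrace.circ k (SkewBrace.cinv k₁) + b = b + SkewBrace.circ k (SkewBrace.cinv k₁) := by
  -- `-k₁' + k ∘ k₁'` is central
  have hu : ∀ x : A, (-(cinv k₁) + circ k (cinv k₁)) + x
      = x + (-(cinv k₁) + circ k (cinv k₁)) := zr_central hk (cinv k₁)
  -- `-k₁'` is central (take z = k₁, c = k₁')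
  have hv : ∀ x : A, -(cinv k₁) + x = x + -(cinv k₁) := by
    intro x
    have := zr_central hk₁ (cinv k₁) x
    simpa [circ_cinv] using this
  -- hence `k₁'` is central
  have hv' : ∀ x : A, cinv k₁ + x = x + cinv k₁ := by
    intro x
    have h2 := congrArg (fun y => cinv k₁ + (y + cinv k₁)) (hv x)
    simp only [add_assoc, neg_add_cancel, add_neg_cancel, add_zero, neg_add_cancel_left, add_neg_cancel_left] at h2
    exact h2.symm
  -- decompose `k ∘ k₁' = k₁' + (-k₁' + k ∘ k₁')`
  calc circ k (cinv k₁) + b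
      = cinv k₁ + (-(cinv k₁) + circ k (cinv k₁)) + b := by simp
    _ = cinv k₁ + ((-(cinv k₁) + circ k (cinv k₁)) + b) := by rw [add_assoc]
    _ = cinv k₁ + (b + (-(cinv k₁) + circ k (cinv k₁))) := by rw [hu b]
    _ = cinv k₁ + b + (-(cinv k₁) + circ k (cinv k₁)) := by rw [add_assoc]
    _ = b + cinv k₁ + (-(cinv k₁) + circ k (cinv k₁)) := by rw [hv' b]
    _ = b + circ k (cinv k₁) := by simp [add_assoc]
end

section
/- Let f : A → B be a surjective skew brace homomorphism such that for all k ∈ ker f and b ∈ A one has k*b = 0, b*k = 0, and c + b*k - c = 0 for all c ∈ A. Then for any (a,a₁),(b₀,b₁) ∈ A × A with f(a) = f(b₀) and f(a₁) = f(b₁), one has a * a₁ = b₀ * b₁. -/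
open SkewBrace

theorem stmt9 {A B : Type*} [SkewBrace A] [SkewBrace B] (f : A → B)
    (hadd : ∀ x y : A, f (x + y) = f x + f y)
    (hcirc : ∀ x y : A, f (SkewBrace.circ x y) = SkewBrace.circ (f x) (f y))
    (hsurj : Function.Surjective f)
    (hker : ∀ k : A, f k = 0 → ∀ b : A,
      star k b = 0 ∧ star b k = 0 ∧ ∀ c : A, c + star b k - c = 0)
    (a a₁ b₀ b₁ : A) (h₀ : f a = f b₀) (h₁ : f a₁ = f b₁) :
    star a a₁ = star b₀ b₁ := by
  have hf0 : f 0 = 0 := by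
    have h := hadd 0 0
    rw [add_zero] at h
    exact (left_eq_add.mp h)
  have hfneg : ∀ x : A, f (-x) = - f x := by
    intro x
    have h := hadd (-x) x
    rw [neg_add_cancel, hf0] at h
    exact eq_neg_of_add_eq_zero_left h.symm
  have hck : ∀ k : A, f k = 0 → ∀ x : A, circ k x = k + x := by
    intro k hk x
    have h := (hker k hk x).1
    unfold SkewBrace.star at h
    have h2 : -k + circ k x = x := sub_eq_zero.mp h
    have := congrArg (k + ·) h2
    simpa [← add_assoc] using this
  have hck2 : ∀ k : A, f k = 0 → ∀ x : A, circ x k = x + k := by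
    intro k hk x
    have h := (hker k hk x).2.1
    unfold SkewBrace.star at h
    have h2 : -x + circ x k = k := sub_eq_zero.mp h
    have := congrArg (x + ·) h2
    simpa [← add_assoc] using this
  have hfk : f (circ a (cinv b₀)) = 0 := by
    rw [hcirc, h₀]
    have h1 : circ (f (cinv b₀)) (f b₀) = 0 := by rw [← hcirc, cinv_circ, hf0]
    have h2 : f (cinv b₀) = cinv (f b₀) := by
      calc f (cinv b₀) = circ (f (cinv b₀)) 0 := (circ_zero _).symm
        _ = circ (f (cinv b₀)) (circ (f b₀) (cinv (f b₀))) := by rw [circ_cinv]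
        _ = circ (circ (f (cinv b₀)) (f b₀)) (cinv (f b₀)) := (circ_assoc _ _ _).symm
        _ = cinv (f b₀) := by rw [h1, zero_circ]
    rw [h2, circ_cinv]
  have step1 : ∀ k : A, f k = 0 → star (circ k b₀) a₁ = star b₀ a₁ := by
    intro k hk
    unfold SkewBrace.star
    rw [circ_assoc, hck k hk, hck k hk, neg_add_rev]
    simp [sub_eq_add_neg, add_assoc]
  have ha : a = circ (circ a (cinv b₀)) b₀ := by
    rw [circ_assoc, cinv_circ, circ_zero]
  have hfk2 : f (-b₁ + a₁) = 0 := by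
    rw [hadd, hfneg, h₁, neg_add_cancel]
  have ha1 : a₁ = b₁ + (-b₁ + a₁) := by rw [← add_assoc, add_neg_cancel, zero_add]
  have step2 : star b₀ (b₁ + (-b₁ + a₁)) = star b₀ b₁ := by
    unfold SkewBrace.star
    rw [compat, hck2 _ hfk2 b₀]
    simp [sub_eq_add_neg, add_assoc, neg_add_rev]
  calc star a a₁ = star (circ (circ a (cinv b₀)) b₀) a₁ := by rw [← ha]
    _ = star b₀ a₁ := step1 _ hfk
    _ = star b₀ (b₁ + (-b₁ + a₁)) := by rw [← ha1]
    _ = star b₀ b₁ := step2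
end

section
/- Let A be a skew brace in which every right distributor vanishes, i.e., (a+b)∘c = a∘c - c + b∘c for all a,b,c ∈ A, and in which (A,+) is abelian. Then defining a·b := a*b = -a + a∘b - b makes (A,+,·) a (not necessarily unital) associative ring. -/
open SkewBrace

theorem stmt14 {A : Type*} [SkewBrace A]
    (hrd : ∀ a b c : A, SkewBrace.circ (a + b) c =
      SkewBrace.circ a c - c + SkewBrace.circ b c)
    (hab : ∀ a b : A, a + b = b + a) :
    (∀ a b c : A, star a (b + c) = star a b + star a c) ∧
    (∀ a b c : A, star (a + b) c = star a c + star b c) ∧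
    (∀ a b c : A, star (star a b) c = star a (star b c)) := by
  letI : AddCommGroup A := { ‹SkewBrace A›.toAddGroup with add_comm := hab }
  have hl : ∀ a b c : A, star a (b + c) = star a b + star a c := by
    intro a b c
    simp only [SkewBrace.star, SkewBrace.compat]
    abel
  have hr : ∀ a b c : A, star (a + b) c = star a c + star b c := by
    intro a b c
    simp only [SkewBrace.star, hrd]
    abel
  have hc : ∀ a b : A, SkewBrace.circ a b = a + star a b + b := by
    intro a b
    simp only [SkewBrace.star]
    abel
  refine ⟨hl, hr, ?_⟩
  intro a b c
  have key := SkewBrace.circ_assoc (A := A) a b c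
  rw [hc (SkewBrace.circ a b) c, hc a (SkewBrace.circ b c), hc a b, hc b c,
    hr, hr, hl, hl] at key
  have key2 : (a + star a b + b + star a c + star b c + c) + star (star a b) c
      = (a + star a b + b + star a c + star b c + c) + star a (star b c) := by
    calc (a + star a b + b + star a c + star b c + c) + star (star a b) c
        = a + star a b + b + (star a c + star (star a b) c + star b c) + c := by abel
      _ = a + (star a b + star a (star b c) + star a c) + (b + star b c + c) := key
      _ = (a + star a b + b + star a c + star b c + c) + star a (star b c) := by abel
  exact add_left_cancel key2
end

section
/- Let A be a skew brace, I an ideal, and J = [I,A]_RadRng. Then for all a ∈ I and b, d ∈ A, the following congruences hold modulo J: (b∘a - b)∘d - d ≡ b∘a∘d - b∘d, (a∘b - b)∘d - d ≡ a∘b∘d - b∘d, (b - b∘a)∘d - d ≡ b∘d - b∘a∘d, and (b - a∘b)∘d - d ≡ b∘d - a∘b∘d. -/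
/-!
Each left-hand side is `x ∘ d - d` for some `x ∈ I` of the form `z - y` (e.g. `x = b ∘ a - b`,
`y = b`, `z = b ∘ a`). The difference between `x ∘ d - d` and `(x + y) ∘ d - y ∘ d` is minus the
right distributor `[x, y, d]`, which lies in `J`; so `x ∘ d - d ≡ z ∘ d - y ∘ d` modulo `J`, and
associativity of `∘` rewrites `z ∘ d`.
-/

namespace SkewBrace

variable {A : Type*} [SkewBrace A] {I : AddSubgroup A}

theorem IsIdeal.circ_sub_self_mem (hI : IsIdeal I) {a : A} (ha : a ∈ I) (b : A) :
    circ b a - b ∈ I := by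
  have h : b + (star b a + a) - b = circ b a - b := by
    simp only [star, sub_eq_add_neg, neg_add_cancel_right, add_neg_cancel_left]
  exact h ▸ hI.1 b _ (add_mem (hI.2.1 b a ha) ha)

theorem IsIdeal.circ_sub_mem (hI : IsIdeal I) {a : A} (ha : a ∈ I) (b : A) :
    circ a b - b ∈ I := by
  have h : a + star a b = circ a b - b := by
    simp only [star, sub_eq_add_neg, add_neg_cancel_left, add_assoc]
  exact h ▸ add_mem ha (hI.2.2 b a ha)

theorem IsIdeal.self_sub_circ_mem (hI : IsIdeal I) {a : A} (ha : a ∈ I) (b : A) :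
    b - circ b a ∈ I :=
  neg_sub (circ b a) b ▸ neg_mem (hI.circ_sub_self_mem ha b)

theorem IsIdeal.sub_circ_mem (hI : IsIdeal I) {a : A} (ha : a ∈ I) (b : A) :
    b - circ a b ∈ I :=
  neg_sub (circ a b) b ▸ neg_mem (hI.circ_sub_mem ha b)

theorem neg_rd (x y d : A) : -rd x y d = circ x d - d - (circ (x + y) d - circ y d) := by
  simp only [rd, sub_eq_add_neg, neg_add_rev, neg_neg, add_assoc]

theorem circ_sub_sub_mem_of_rd_mem {J : AddSubgroup A}
    (hJ : ∀ x ∈ I, ∀ y d : A, rd x y d ∈ J) {x : A} (hx : x ∈ I) (y d : A) :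
    circ x d - d - (circ (x + y) d - circ y d) ∈ J :=
  neg_rd x y d ▸ neg_mem (hJ x hx y d)

end SkewBrace

open SkewBrace

theorem stmt18 {A : Type*} [SkewBrace A] (I : AddSubgroup A) (hI : IsIdeal I)
    (J : AddSubgroup A)
    (hJ : J = AddSubgroup.closure
      ({x : A | ∃ a b c : A, (a ∈ I ∨ b ∈ I ∨ c ∈ I) ∧ x = rd a b c} ∪
       {x : A | ∃ a ∈ I, ∃ b : A, x = a + b - a - b}))
    (a : A) (ha : a ∈ I) (b d : A) :
    (SkewBrace.circ (SkewBrace.circ b a - b) d - d) -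
      (SkewBrace.circ b (SkewBrace.circ a d) - SkewBrace.circ b d) ∈ J ∧
    (SkewBrace.circ (SkewBrace.circ a b - b) d - d) -
      (SkewBrace.circ a (SkewBrace.circ b d) - SkewBrace.circ b d) ∈ J ∧
    (SkewBrace.circ (b - SkewBrace.circ b a) d - d) -
      (SkewBrace.circ b d - SkewBrace.circ b (SkewBrace.circ a d)) ∈ J ∧
    (SkewBrace.circ (b - SkewBrace.circ a b) d - d) -
      (SkewBrace.circ b d - SkewBrace.circ a (SkewBrace.circ b d)) ∈ J := by
  have hrd : ∀ x ∈ I, ∀ y c : A, rd x y c ∈ J := fun x hx y c =>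
    hJ ▸ AddSubgroup.subset_closure (Or.inl ⟨x, y, c, Or.inl hx, rfl⟩)
  have h₁ := circ_sub_sub_mem_of_rd_mem hrd (hI.circ_sub_self_mem ha b) b d
  have h₂ := circ_sub_sub_mem_of_rd_mem hrd (hI.circ_sub_mem ha b) b d
  have h₃ := circ_sub_sub_mem_of_rd_mem hrd (hI.self_sub_circ_mem ha b) (circ b a) d
  have h₄ := circ_sub_sub_mem_of_rd_mem hrd (hI.sub_circ_mem ha b) (circ a b) d
  simp only [sub_add_cancel, circ_assoc] at h₁ h₂ h₃ h₄
  exact ⟨h₁, h₂, h₃, h₄⟩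
end
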